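/- For every λ > 0, the class G_λ of λ-quasi-geometrically infinitely divisible distributions on [0,∞) is closed under convergence in distribution: if X_n are R₊-valued with λ-q.g.i.d. distributions and X_n converges in distribution to X, then the distribution of X is λ-q.g.i.d. -/

import Mathlib

open MeasureTheory Real Set

noncomputable section

/-- Convolution of two pmfs on ℕ. -/
def seqConv (f g : ℕ → ℝ) : ℕ → ℝ := fun n => ∑ k ∈ Finset.range (n + 1), f k * g (n - k)

/-- k-fold convolution power of a pmf on ℕ. -/
def seqConvPow (f : ℕ → ℝ) : ℕ → ℕ → ℝ
  | 0 => fun n => if n = 0 then 1 else 0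
  | k + 1 => seqConv f (seqConvPow f k)

/-- `f` is a probability mass function on ℕ. -/
def IsPMF (f : ℕ → ℝ) : Prop := (∀ n, 0 ≤ f n) ∧ ∑' n, f n = 1

/-- pmf of a geometric(p) random sum `X₁ + ⋯ + X_{N_p}` (N_p ≥ 1) of iid variables with pmf f. -/
def geomCompound (p : ℝ) (f : ℕ → ℝ) : ℕ → ℝ :=
  fun n => ∑' k : ℕ, p * (1 - p) ^ k * seqConvPow f (k + 1) n

/-- A distribution on ℕ is geometrically infinitely divisible. -/
def GID (q : ℕ → ℝ) : Prop :=
  ∀ p ∈ Set.Ioo (0 : ℝ) 1, ∃ f : ℕ → ℝ, IsPMF f ∧ ∀ n, q n = geomCompound p f n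

/-- Convolution of measures on ℝ (distribution of the sum of independent rv's). -/
def mconv (μ ν : Measure ℝ) : Measure ℝ :=
  Measure.map (fun x : ℝ × ℝ => x.1 + x.2) (μ.prod ν)

/-- k-fold convolution power of a measure on ℝ. -/
def mpow (μ : Measure ℝ) : ℕ → Measure ℝ
  | 0 => Measure.dirac 0
  | k + 1 => mconv μ (mpow μ k)

/-- A distribution on [0,∞) is geometrically infinitely divisible: for every p ∈ (0,1)
it is the distribution of a geometric(p) random sum of iid nonnegative rv's. -/
def GIDM (μ : Measure ℝ) : Prop :=
  ∀ p ∈ Set.Ioo (0 : ℝ) 1, ∃ ν : Measure ℝ, IsProbabilityMeasure ν ∧ ν (Set.Iio 0) = 0 ∧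
    μ = Measure.sum (fun k : ℕ => (ENNReal.ofReal (p * (1 - p) ^ k)) • mpow ν (k + 1))

/-- Laplace–Stieltjes transform of a measure on ℝ. -/
def lst (μ : Measure ℝ) (u : ℝ) : ℝ := ∫ x, Real.exp (-(u * x)) ∂μ

/-- pmf of the λ-Poisson mixture with mixing distribution μ. -/
def pmix (l : ℝ) (μ : Measure ℝ) (n : ℕ) : ℝ :=
  ∫ x, (l * x) ^ n * Real.exp (-(l * x)) / (n.factorial : ℝ) ∂μ

/-- μ is λ-quasi-geometrically infinitely divisible: its λ-Poisson mixture is g.i.d. -/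
def QGID (l : ℝ) (μ : Measure ℝ) : Prop := GID (pmix l μ)

/-- K(τ) = -φ'(τ)/φ(τ)² where φ is the LST of μ. -/
def Kfun (μ : Measure ℝ) (τ : ℝ) : ℝ := -(deriv (lst μ) τ) / (lst μ τ) ^ 2

/-- G is a probability generating function (on |z| ≤ 1). -/
def IsPGF (G : ℝ → ℝ) : Prop :=
  ∃ f : ℕ → ℝ, IsPMF f ∧ ∀ z : ℝ, |z| ≤ 1 → G z = ∑' n, f n * z ^ n

end

/-! Fix `p ∈ (0,1)` and write each `pmix l (μs m)` as the geometric(`p`) compound of a pmf `F m`.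
The Poisson weights are bounded continuous functions of the mixing variable, so
`pmix l (μs m) → pmix l μ` pointwise. By compactness of `[0,1]^ℕ` a subsequence of `F m`
converges pointwise to some `f` of mass `s ≤ 1`, and dominated convergence (the geometric weights
dominate) gives `pmix l μ = geomCompound p f`. The compound of a sequence of mass `s` has mass
`p s / (1 - (1 - p) s)`, which equals the mass `1` of `pmix l μ` only for `s = 1`: no mass escapes
in the limit, and `f` is a pmf. -/

open Filter Topology
open scoped BoundedContinuousFunction

lemma IsPMF.hasSum {f : ℕ → ℝ} (hf : IsPMF f) : HasSum f 1 := by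
  have hs : Summable f := by
    by_contra h
    simpa [tsum_eq_zero_of_not_summable h] using hf.2
  simpa [hf.2] using hs.hasSum

section Convolution

variable {f g : ℕ → ℝ}

lemma seqConv_nonneg (hf : 0 ≤ f) (hg : 0 ≤ g) : 0 ≤ seqConv f g :=
  fun _ => Finset.sum_nonneg fun k _ => mul_nonneg (hf k) (hg _)

lemma hasSum_seqConv {a b : ℝ} (hf0 : 0 ≤ f) (hg0 : 0 ≤ g) (hf : HasSum f a) (hg : HasSum g b) :
    HasSum (seqConv f g) (a * b) := by
  have hnorm : ∀ {u : ℕ → ℝ}, 0 ≤ u → (fun n => ‖u n‖) = u :=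
    fun hu => funext fun n => Real.norm_of_nonneg (hu n)
  have h := hasSum_sum_range_mul_of_summable_norm (R := ℝ)
    (hnorm hf0 ▸ hf.summable) (hnorm hg0 ▸ hg.summable)
  rwa [hf.tsum_eq, hg.tsum_eq] at h

lemma seqConvPow_nonneg (hf : 0 ≤ f) : ∀ k, 0 ≤ seqConvPow f k
  | 0 => fun n => by unfold seqConvPow; split_ifs <;> norm_num
  | k + 1 => seqConv_nonneg hf (seqConvPow_nonneg hf k)

lemma hasSum_seqConvPow {a : ℝ} (hf0 : 0 ≤ f) (hf : HasSum f a) :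
    ∀ k, HasSum (seqConvPow f k) (a ^ k)
  | 0 => by rw [pow_zero]; exact hasSum_ite_eq 0 1
  | k + 1 => by
    rw [pow_succ']
    exact hasSum_seqConv hf0 (seqConvPow_nonneg hf0 k) hf (hasSum_seqConvPow hf0 hf k)

lemma seqConvPow_le_one {a : ℝ} (hf0 : 0 ≤ f) (hf : HasSum f a) (ha : a ≤ 1) (k n : ℕ) :
    seqConvPow f k n ≤ 1 :=
  calc seqConvPow f k n ≤ a ^ k :=
        le_hasSum (hasSum_seqConvPow hf0 hf k) n fun j _ => seqConvPow_nonneg hf0 k j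
    _ ≤ 1 := pow_le_one₀ (hf.nonneg hf0) ha

lemma tendsto_seqConvPow {ι : Type*} {L : Filter ι} {F : ι → ℕ → ℝ}
    (h : ∀ n, Tendsto (fun j => F j n) L (𝓝 (f n))) :
    ∀ k n, Tendsto (fun j => seqConvPow (F j) k n) L (𝓝 (seqConvPow f k n))
  | 0, _ => tendsto_const_nhds
  | k + 1, n => by
    simp only [seqConvPow, seqConv]
    exact tendsto_finsetSum _ fun i _ => (h i).mul (tendsto_seqConvPow h k (n - i))

end Convolution

section GeomCompound

variable {p : ℝ} {f : ℕ → ℝ}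

lemma hasSum_geomCompound {s : ℝ} (hp : p ∈ Ioo 0 1) (hf0 : 0 ≤ f) (hf : HasSum f s)
    (hs : s ≤ 1) : HasSum (geomCompound p f) (p * s / (1 - (1 - p) * s)) := by
  set G : ℕ → ℕ → ℝ := fun k n => p * (1 - p) ^ k * seqConvPow f (k + 1) n
  have hq0 : 0 ≤ 1 - p := by linarith [hp.2]
  have hqs : (1 - p) * s < 1 := by nlinarith [hp.1, hf.nonneg hf0]
  have hrow : ∀ k, HasSum (G k) (p * (1 - p) ^ k * s ^ (k + 1)) :=
    fun k => (hasSum_seqConvPow hf0 hf (k + 1)).mul_left _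
  have hrows : HasSum (fun k => p * (1 - p) ^ k * s ^ (k + 1)) (p * s / (1 - (1 - p) * s)) := by
    rw [show (fun k => p * (1 - p) ^ k * s ^ (k + 1)) = fun k => p * s * ((1 - p) * s) ^ k from
      funext fun k => by rw [mul_pow]; ring, div_eq_mul_inv]
    exact (hasSum_geometric_of_lt_one (mul_nonneg hq0 (hf.nonneg hf0)) hqs).mul_left (p * s)
  have hG : Summable (Function.uncurry G) := by
    refine (summable_prod_of_nonneg fun z => ?_).2
      ⟨fun k => (hrow k).summable, hrows.summable.congr fun k => ((hrow k).tsum_eq).symm⟩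
    exact mul_nonneg (mul_nonneg hp.1.le (pow_nonneg hq0 _)) (seqConvPow_nonneg hf0 _ _)
  have hcols : HasSum (geomCompound p f) (∑' n, ∑' k, G k n) :=
    hG.prod_symm.prod.hasSum
  rwa [hG.tsum_comm, tsum_congr fun k => (hrow k).tsum_eq, hrows.tsum_eq] at hcols

lemma eq_one_of_hasSum_geomCompound_one {s : ℝ} (hp : p ∈ Ioo 0 1) (hf0 : 0 ≤ f)
    (hf : HasSum f s) (hs : s ≤ 1) (h : HasSum (geomCompound p f) 1) : s = 1 := by
  have hd : 0 < 1 - (1 - p) * s := by nlinarith [hp.1, hp.2, hf.nonneg hf0]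
  have h1 := (hasSum_geomCompound hp hf0 hf hs).unique h
  rw [div_eq_one_iff_eq hd.ne'] at h1
  nlinarith [hp.1]

lemma tendsto_geomCompound {ι : Type*} {L : Filter ι} {F : ι → ℕ → ℝ} (hp : p ∈ Ioo 0 1)
    (hF : ∀ j, IsPMF (F j)) (h : ∀ n, Tendsto (fun j => F j n) L (𝓝 (f n))) (n : ℕ) :
    Tendsto (fun j => geomCompound p (F j) n) L (𝓝 (geomCompound p f n)) := by
  have hq0 : 0 ≤ 1 - p := by linarith [hp.2]
  have hbound : ∀ j k, ‖p * (1 - p) ^ k * seqConvPow (F j) (k + 1) n‖ ≤ p * (1 - p) ^ k := by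
    intro j k
    have hw : 0 ≤ p * (1 - p) ^ k := mul_nonneg hp.1.le (pow_nonneg hq0 k)
    rw [Real.norm_of_nonneg (mul_nonneg hw (seqConvPow_nonneg (hF j).1 _ _))]
    exact mul_le_of_le_one_right hw (seqConvPow_le_one (hF j).1 (hF j).hasSum le_rfl _ _)
  exact tendsto_tsum_of_dominated_convergence
    ((summable_geometric_of_lt_one hq0 (by linarith [hp.1])).mul_left p)
    (fun k => (tendsto_seqConvPow h (k + 1) n).const_mul _)
    (Eventually.of_forall hbound)

end GeomCompound

section PointwiseLimit

variable {F : ℕ → ℕ → ℝ} {f : ℕ → ℝ}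

lemma exists_subseq_tendsto_of_isPMF (hF : ∀ m, IsPMF (F m)) :
    ∃ f : ℕ → ℝ, ∃ φ : ℕ → ℕ, StrictMono φ ∧ ∀ n, Tendsto (fun j => F (φ j) n) atTop (𝓝 (f n)) := by
  let G : ℕ → ℕ → Icc (0 : ℝ) 1 := fun m n =>
    ⟨F m n, (hF m).1 n, le_hasSum (hF m).hasSum n fun j _ => (hF m).1 j⟩
  obtain ⟨g, φ, hφ, hG⟩ := CompactSpace.tendsto_subseq G
  exact ⟨fun n => g n, φ, hφ, fun n =>
    (continuous_subtype_val.tendsto _).comp (tendsto_pi_nhds.mp hG n)⟩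

variable {ι : Type*} {L : Filter ι} [L.NeBot] {F : ι → ℕ → ℝ}

lemma nonneg_of_tendsto_isPMF (hF : ∀ j, IsPMF (F j))
    (h : ∀ n, Tendsto (fun j => F j n) L (𝓝 (f n))) : 0 ≤ f :=
  fun n => ge_of_tendsto (h n) (Eventually.of_forall fun j => (hF j).1 n)

lemma exists_hasSum_le_one_of_tendsto_isPMF (hF : ∀ j, IsPMF (F j))
    (h : ∀ n, Tendsto (fun j => F j n) L (𝓝 (f n))) : ∃ s ≤ 1, HasSum f s := by
  have hpartial : ∀ u : Finset ℕ, ∑ n ∈ u, f n ≤ 1 := fun u =>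
    le_of_tendsto (tendsto_finsetSum u fun n _ => h n) (Eventually.of_forall fun j =>
      sum_le_hasSum u (fun n _ => (hF j).1 n) (hF j).hasSum)
  have hf : Summable f := summable_of_sum_le (nonneg_of_tendsto_isPMF hF h) hpartial
  exact ⟨_, hf.tsum_le_of_sum_le hpartial, hf.hasSum⟩

end PointwiseLimit

section Poisson

/-- The Poisson probability of `n` at rate `l * x`, with the rate clipped at `0` so that it is a
bounded continuous function of `x` on all of `ℝ`. -/
noncomputable def poissonWeight (l : ℝ) (n : ℕ) (x : ℝ) : ℝ :=
  exp (-((l * x).toNNReal : ℝ)) * ((l * x).toNNReal : ℝ) ^ n / n.factorial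

lemma hasSum_poissonWeight (l x : ℝ) : HasSum (fun n => poissonWeight l n x) 1 :=
  ProbabilityTheory.hasSum_one_poissonMeasure _

lemma poissonWeight_nonneg (l : ℝ) (n : ℕ) (x : ℝ) : 0 ≤ poissonWeight l n x := by
  unfold poissonWeight
  positivity

lemma continuous_poissonWeight (l : ℝ) (n : ℕ) : Continuous (poissonWeight l n) := by
  unfold poissonWeight
  fun_prop

noncomputable def poissonWeightBCF (l : ℝ) (n : ℕ) : ℝ →ᵇ ℝ :=
  .ofNormedAddCommGroup (poissonWeight l n) (continuous_poissonWeight l n) 1 fun x => by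
    rw [Real.norm_of_nonneg (poissonWeight_nonneg l n x)]
    exact le_hasSum (hasSum_poissonWeight l x) n fun m _ => poissonWeight_nonneg l m x

variable {l : ℝ} {μ : Measure ℝ}

lemma pmix_eq_integral_poissonWeight (hl : 0 ≤ l) (hμ : μ (Iio 0) = 0) (n : ℕ) :
    pmix l μ n = ∫ x, poissonWeight l n x ∂μ := by
  have hμ' : ∀ᵐ x ∂μ, 0 ≤ x := by
    rw [ae_iff]
    simp only [not_le]
    exact hμ
  refine integral_congr_ae (hμ'.mono fun x hx => ?_)
  simp only [poissonWeight, Real.coe_toNNReal _ (mul_nonneg hl hx)]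
  ring

lemma hasSum_pmix [IsProbabilityMeasure μ] (hl : 0 ≤ l) (hμ : μ (Iio 0) = 0) :
    HasSum (pmix l μ) 1 := by
  have h := hasSum_integral_of_dominated_convergence (μ := μ) (fun n => poissonWeight l n)
    (fun n => (continuous_poissonWeight l n).aestronglyMeasurable)
    (fun n => .of_forall fun x => (Real.norm_of_nonneg (poissonWeight_nonneg l n x)).le)
    (.of_forall fun x => (hasSum_poissonWeight l x).summable)
    (by simp only [fun x => (hasSum_poissonWeight l x).tsum_eq]; exact integrable_const 1)
    (.of_forall fun x => hasSum_poissonWeight l x)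
  simpa only [← pmix_eq_integral_poissonWeight hl hμ, integral_const, probReal_univ, one_smul]
    using h

lemma tendsto_pmix {μs : ℕ → Measure ℝ} (hl : 0 ≤ l) (hμs : ∀ m, μs m (Iio 0) = 0)
    (hμ : μ (Iio 0) = 0)
    (hconv : ∀ g : ℝ →ᵇ ℝ, Tendsto (fun m => ∫ x, g x ∂(μs m)) atTop (𝓝 (∫ x, g x ∂μ)))
    (n : ℕ) : Tendsto (fun m => pmix l (μs m) n) atTop (𝓝 (pmix l μ n)) := by
  simp only [pmix_eq_integral_poissonWeight hl (hμs _), pmix_eq_integral_poissonWeight hl hμ]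
  exact hconv (poissonWeightBCF l n)

end Poisson

theorem stmt11_general (l : ℝ) (hl : 0 < l) (μs : ℕ → Measure ℝ) (μ : Measure ℝ)
    [IsProbabilityMeasure μ]
    (hsupp : ∀ n, (μs n) (Set.Iio 0) = 0) (hsupp' : μ (Set.Iio 0) = 0)
    (hqgid : ∀ n, QGID l (μs n))
    (hconv : ∀ f : BoundedContinuousFunction ℝ ℝ,
      Filter.Tendsto (fun n => ∫ x, f x ∂(μs n)) Filter.atTop (nhds (∫ x, f x ∂μ))) :
    QGID l μ := by
  intro p hp
  choose F hF hFeq using fun m => hqgid m p hp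
  obtain ⟨f, φ, hφ, hlim⟩ := exists_subseq_tendsto_of_isPMF hF
  have hF' : ∀ j, IsPMF (F (φ j)) := fun j => hF (φ j)
  have hf0 := nonneg_of_tendsto_isPMF hF' hlim
  obtain ⟨s, hs, hfs⟩ := exists_hasSum_le_one_of_tendsto_isPMF hF' hlim
  have heq : ∀ n, pmix l μ n = geomCompound p f n := fun n =>
    tendsto_nhds_unique ((tendsto_pmix hl.le hsupp hsupp' hconv n).comp hφ.tendsto_atTop)
      (by simpa only [Function.comp_def, hFeq] using tendsto_geomCompound hp hF' hlim n)
  have hs1 : s = 1 := eq_one_of_hasSum_geomCompound_one hp hf0 hfs hs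
    (by simpa only [funext heq] using hasSum_pmix hl.le hsupp')
  exact ⟨f, ⟨hf0, hs1 ▸ hfs.tsum_eq⟩, heq⟩

/-- For every λ > 0 the class of λ-q.g.i.d. distributions on [0,∞) is
closed under convergence in distribution. -/
theorem stmt11 (l : ℝ) (hl : 0 < l) (μs : ℕ → Measure ℝ) (μ : Measure ℝ)
    [∀ n, IsProbabilityMeasure (μs n)] [IsProbabilityMeasure μ]
    (hsupp : ∀ n, (μs n) (Set.Iio 0) = 0) (hsupp' : μ (Set.Iio 0) = 0)
    (hqgid : ∀ n, QGID l (μs n))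
    (hconv : ∀ f : BoundedContinuousFunction ℝ ℝ,
      Filter.Tendsto (fun n => ∫ x, f x ∂(μs n)) Filter.atTop (nhds (∫ x, f x ∂μ))) :
    QGID l μ :=
  stmt11_general l hl μs μ hsupp hsupp' hqgid hconv
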